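/- arXiv:2112.15297 — 2 statements merged into one kernel-verified Lean document; each statement's English description precedes it below -/
import Mathlib

section
/- Let G be a finite simple graph and v ∈ V(G). Then min-match(G∖v) ≤ min-match(G), where G∖v is the induced subgraph of G on V(G)∖{v}. -/
/-! A matching is maximal exactly when it touches (shares a vertex with) every edge. Let `M` be a
maximal matching of `G`. Its edges avoiding `v` form a matching of `G ∖ v` that touches every edge
of `G ∖ v` except possibly some through the partner `w` of `v` in `M`; adding one such edge, if
there is any, gives a maximal matching of `G ∖ v` with at most `|M|` edges.

Conversely, adding at most one edge at `v` turns a maximal matching of `G ∖ v` into one of `G`.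
So `G` has a finite maximal matching whenever `G ∖ v` does, which covers the case where
`minMatchNum G` is the junk value `sInf ∅ = 0`. -/

namespace MatchingPaper

variable {V : Type*}

/-- `M` is a matching of `G` : a finite set of edges of `G` that are pairwise disjoint. -/
def IsMatching (G : SimpleGraph V) (M : Finset (Sym2 V)) : Prop :=
  (↑M : Set (Sym2 V)) ⊆ G.edgeSet ∧
    ∀ e ∈ M, ∀ f ∈ M, e ≠ f → ∀ v : V, v ∈ e → v ∉ f

open Classical in
/-- `M` is a maximal matching of `G` : adding any further edge of `G` destroys
the matching property. -/
def IsMaximalMatching (G : SimpleGraph V) (M : Finset (Sym2 V)) : Prop :=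
  IsMatching G M ∧ ∀ e ∈ G.edgeSet, e ∉ M → ¬ IsMatching G (insert e M)

/-- `M` is an induced matching of `G` : a matching such that no edge of `G`
meets two distinct edges of `M`. -/
def IsInducedMatching (G : SimpleGraph V) (M : Finset (Sym2 V)) : Prop :=
  IsMatching G M ∧
    ∀ e ∈ M, ∀ f ∈ M, e ≠ f → ∀ g ∈ G.edgeSet,
      (∃ v : V, v ∈ g ∧ v ∈ e) → ¬ ∃ v : V, v ∈ g ∧ v ∈ f

/-- The matching number `match(G)` : the maximum size of a matching of `G`. -/
noncomputable def matchNum (G : SimpleGraph V) : ℕ :=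
  sSup {n : ℕ | ∃ M : Finset (Sym2 V), IsMatching G M ∧ M.card = n}

/-- The minimum matching number `min-match(G)` : the minimum size of a maximal
matching of `G`. -/
noncomputable def minMatchNum (G : SimpleGraph V) : ℕ :=
  sInf {n : ℕ | ∃ M : Finset (Sym2 V), IsMaximalMatching G M ∧ M.card = n}

/-- The induced matching number `ind-match(G)` : the maximum size of an induced
matching of `G`. -/
noncomputable def indMatchNum (G : SimpleGraph V) : ℕ :=
  sSup {n : ℕ | ∃ M : Finset (Sym2 V), IsInducedMatching G M ∧ M.card = n}

section

variable {W : Type*} {G : SimpleGraph V} {M N : Finset (Sym2 V)} {e : Sym2 V}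

def Touches (M : Finset (Sym2 V)) (e : Sym2 V) : Prop :=
  ∃ f ∈ M, ∃ x ∈ e, x ∈ f

lemma touches_of_mem (he : e ∈ M) : Touches M e := by
  induction e using Sym2.ind with
  | _ a b => exact ⟨s(a, b), he, a, Sym2.mem_mk_left a b, Sym2.mem_mk_left a b⟩

lemma IsMatching.mono (hM : IsMatching G M) (hNM : N ⊆ M) : IsMatching G N :=
  ⟨(Finset.coe_subset.mpr hNM).trans hM.1, fun e he f hf => hM.2 e (hNM he) f (hNM hf)⟩

open Classical in
lemma IsMatching.insert_of_not_touches (hM : IsMatching G M) (he : e ∈ G.edgeSet)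
    (hMe : ¬Touches M e) : IsMatching G (insert e M) := by
  refine ⟨by simpa [Set.insert_subset_iff] using ⟨he, hM.1⟩, ?_⟩
  simp only [Finset.mem_insert]
  rintro f (rfl | hf) g (rfl | hg) hfg x hxf hxg
  · exact hfg rfl
  · exact hMe ⟨g, hg, x, hxf, hxg⟩
  · exact hMe ⟨f, hf, x, hxg, hxf⟩
  · exact hM.2 f hf g hg hfg x hxf hxg

open Classical in
lemma isMaximalMatching_iff_forall_touches :
    IsMaximalMatching G M ↔ IsMatching G M ∧ ∀ e ∈ G.edgeSet, Touches M e := by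
  refine and_congr_right fun hM => forall₂_congr fun e he => ?_
  constructor
  · intro hmax
    by_contra hMe
    exact hmax (fun heM => hMe (touches_of_mem heM)) (hM.insert_of_not_touches he hMe)
  · rintro ⟨f, hf, x, hxe, hxf⟩ heM hins
    exact hins.2 e (Finset.mem_insert_self e M) f (Finset.mem_insert_of_mem hf)
      (fun hef => heM (hef ▸ hf)) x hxe hxf

open Classical in
lemma IsMatching.exists_isMaximalMatching_card_le_succ (hM : IsMatching G M) {w : V}
    (hw : ∀ e ∈ G.edgeSet, ¬Touches M e → w ∈ e) :
    ∃ M', IsMaximalMatching G M' ∧ M'.card ≤ M.card + 1 := by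
  by_cases hfree : ∃ g ∈ G.edgeSet, ¬Touches M g
  · obtain ⟨g, hg, hMg⟩ := hfree
    refine ⟨insert g M, isMaximalMatching_iff_forall_touches.mpr
      ⟨hM.insert_of_not_touches hg hMg, ?_⟩, Finset.card_insert_le g M⟩
    intro e he
    by_cases hMe : Touches M e
    · obtain ⟨f, hf, x, hxe, hxf⟩ := hMe
      exact ⟨f, Finset.mem_insert_of_mem hf, x, hxe, hxf⟩
    · exact ⟨g, Finset.mem_insert_self g M, w, hw e he hMe, hw g hg hMg⟩
  · push Not at hfree
    exact ⟨M, isMaximalMatching_iff_forall_touches.mpr ⟨hM, hfree⟩, Nat.le_succ _⟩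

lemma minMatchNum_le_card (hM : IsMaximalMatching G M) : minMatchNum G ≤ M.card :=
  Nat.sInf_le ⟨M, hM, rfl⟩

lemma exists_isMaximalMatching_card_eq_minMatchNum (h : ∃ M, IsMaximalMatching G M) :
    ∃ M, IsMaximalMatching G M ∧ M.card = minMatchNum G :=
  let ⟨M, hM⟩ := h
  Nat.sInf_mem (s := {n | ∃ M, IsMaximalMatching G M ∧ M.card = n}) ⟨M.card, M, hM, rfl⟩

lemma minMatchNum_eq_zero_of_forall_not_isMaximalMatching (h : ∀ M, ¬IsMaximalMatching G M) :
    minMatchNum G = 0 := by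
  simp [minMatchNum, h]

lemma minMatchNum_le_of_exists {H : SimpleGraph W}
    (hle : ∀ M, IsMaximalMatching G M → ∃ N, IsMaximalMatching H N ∧ N.card ≤ M.card)
    (hex : (∃ N, IsMaximalMatching H N) → ∃ M, IsMaximalMatching G M) :
    minMatchNum H ≤ minMatchNum G := by
  by_cases hG : ∃ M, IsMaximalMatching G M
  · obtain ⟨M, hM, hcard⟩ := exists_isMaximalMatching_card_eq_minMatchNum hG
    obtain ⟨N, hN, hNM⟩ := hle M hM
    exact (minMatchNum_le_card hN).trans (hNM.trans hcard.le)
  · have hH : ∀ N, ¬IsMaximalMatching H N := fun N hN => hG (hex ⟨N, hN⟩)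
    rw [minMatchNum_eq_zero_of_forall_not_isMaximalMatching hH]
    exact Nat.zero_le _

lemma exists_mem_map_and_mem_map_iff (f : V ↪ W) {e g : Sym2 V} :
    (∃ x ∈ e.map f, x ∈ g.map f) ↔ ∃ x ∈ e, x ∈ g := by
  simp only [Sym2.mem_map]
  constructor
  · rintro ⟨_, ⟨x, hx, rfl⟩, y, hy, hyx⟩
    exact ⟨x, hx, f.injective hyx ▸ hy⟩
  · rintro ⟨x, hx, hg⟩
    exact ⟨f x, ⟨x, hx, rfl⟩, x, hg, rfl⟩

lemma touches_map_iff (f : V ↪ W) : Touches (M.map f.sym2Map) (e.map f) ↔ Touches M e := by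
  simp only [Touches, Finset.mem_map, Function.Embedding.sym2Map_apply]
  constructor
  · rintro ⟨_, ⟨g, hg, rfl⟩, h⟩
    exact ⟨g, hg, (exists_mem_map_and_mem_map_iff f).mp h⟩
  · rintro ⟨g, hg, h⟩
    exact ⟨g.map f, ⟨g, hg, rfl⟩, (exists_mem_map_and_mem_map_iff f).mpr h⟩

lemma isMatching_map_iff {G' : SimpleGraph W} (φ : G ↪g G') :
    IsMatching G' (M.map φ.toEmbedding.sym2Map) ↔ IsMatching G M := by
  have hmeet (e g : Sym2 V) :
      (∀ x ∈ e.map φ.toEmbedding, x ∉ g.map φ.toEmbedding) ↔ ∀ x ∈ e, x ∉ g := by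
    simpa only [not_exists, not_and] using (exists_mem_map_and_mem_map_iff φ.toEmbedding).not
  refine and_congr ?_ ?_
  · rw [Finset.coe_map, Set.image_subset_iff]
    exact iff_of_eq (congrArg _ φ.preimage_edgeSet)
  · simp only [Finset.forall_mem_map, Function.Embedding.sym2Map_apply, hmeet,
      (Sym2.map.injective φ.toEmbedding.injective).ne_iff]

section Induce

variable {s : Set V}

noncomputable def restrictEdges (s : Set V) (M : Finset (Sym2 V)) : Finset (Sym2 s) :=
  M.preimage (Sym2.map (↑)) (Sym2.map.injective Subtype.val_injective).injOn

lemma mem_restrictEdges {e : Sym2 s} : e ∈ restrictEdges s M ↔ e.map (↑) ∈ M :=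
  Finset.mem_preimage

lemma map_restrictEdges_subset :
    (restrictEdges s M).map (Function.Embedding.subtype (· ∈ s)).sym2Map ⊆ M :=
  Finset.map_subset_iff_subset_preimage.mpr subset_rfl

lemma card_restrictEdges_le : (restrictEdges s M).card ≤ M.card :=
  Finset.card_map (Function.Embedding.subtype (· ∈ s)).sym2Map ▸
    Finset.card_le_card map_restrictEdges_subset

lemma card_restrictEdges_lt {z : V} (he : e ∈ M) (hze : z ∈ e) (hzs : z ∉ s) :
    (restrictEdges s M).card < M.card := by
  rw [← Finset.card_map (Function.Embedding.subtype (· ∈ s)).sym2Map]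
  refine Finset.card_lt_card ((Finset.ssubset_iff_of_subset map_restrictEdges_subset).mpr
    ⟨e, he, fun he' => hzs ?_⟩)
  obtain ⟨g, -, rfl⟩ := Finset.mem_map.mp he'
  obtain ⟨y, -, rfl⟩ := Sym2.mem_map.mp hze
  exact y.2

lemma IsMatching.restrictEdges (hM : IsMatching G M) :
    IsMatching (G.induce s) (restrictEdges s M) :=
  (isMatching_map_iff (SimpleGraph.Embedding.induce s)).mp (hM.mono map_restrictEdges_subset)

lemma touches_restrictEdges_or {e : Sym2 s} (h : Touches M (e.map (↑))) :
    Touches (restrictEdges s M) e ∨ ∃ f ∈ M, (∃ z ∈ f, z ∉ s) ∧ ∃ y ∈ e, ↑y ∈ f := by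
  obtain ⟨f, hf, x, hxe, hxf⟩ := h
  by_cases hfs : ∀ z ∈ f, z ∈ s
  · left
    refine ⟨f.attachWith hfs, mem_restrictEdges.mpr ?_,
      (exists_mem_map_and_mem_map_iff (Function.Embedding.subtype (· ∈ s))).mp ?_⟩
    · rwa [Sym2.attachWith_map_subtypeVal]
    · simpa only [Function.Embedding.coe_subtype, Sym2.attachWith_map_subtypeVal] using
        ⟨x, hxe, hxf⟩
  · right
    push Not at hfs
    obtain ⟨y, hy, rfl⟩ := Sym2.mem_map.mp hxe
    exact ⟨f, hf, hfs, y, hy, hxf⟩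

lemma IsMaximalMatching.exists_induce_compl_card_le (hM : IsMaximalMatching G M) (v : V) :
    ∃ M', IsMaximalMatching (G.induce {v}ᶜ) M' ∧ M'.card ≤ M.card := by
  obtain ⟨hmatch, htouch⟩ := isMaximalMatching_iff_forall_touches.mp hM
  have hN : IsMatching (G.induce {v}ᶜ) (restrictEdges {v}ᶜ M) := hmatch.restrictEdges
  have hcover : ∀ e ∈ (G.induce {v}ᶜ).edgeSet,
      Touches (restrictEdges {v}ᶜ M) e ∨ ∃ f ∈ M, v ∈ f ∧ ∃ y ∈ e, ↑y ∈ f := by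
    intro e he
    refine (touches_restrictEdges_or (htouch _
      ((SimpleGraph.Embedding.induce _).map_mem_edgeSet_iff.mpr he))).imp_right ?_
    rintro ⟨f, hf, ⟨z, hzf, hzv⟩, hy⟩
    rw [Set.notMem_compl_iff, Set.mem_singleton_iff] at hzv
    exact ⟨f, hf, hzv ▸ hzf, hy⟩
  by_cases hv : ∃ f ∈ M, v ∈ f
  · obtain ⟨_, hf, hvf⟩ := hv
    obtain ⟨w, rfl⟩ := Sym2.mem_iff_exists.mp hvf
    have hwv : w ≠ v := (G.ne_of_adj (hmatch.1 hf)).symm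
    have hw : ∀ e ∈ (G.induce {v}ᶜ).edgeSet,
        ¬Touches (restrictEdges {v}ᶜ M) e → (⟨w, hwv⟩ : ({v}ᶜ : Set V)) ∈ e := by
      intro e he hNe
      obtain ⟨f, hf', hvf', y, hye, hyf⟩ := (hcover e he).resolve_left hNe
      obtain rfl : f = s(v, w) := by_contra fun hne => hmatch.2 _ hf' _ hf hne v hvf' hvf
      have hyw : (y : V) = w := (Sym2.mem_iff.mp hyf).resolve_left y.2
      exact (Subtype.ext hyw : y = ⟨w, hwv⟩) ▸ hye
    obtain ⟨M', hM', hcard⟩ := hN.exists_isMaximalMatching_card_le_succ hw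
    exact ⟨M', hM', hcard.trans (card_restrictEdges_lt hf hvf (by simp))⟩
  · push Not at hv
    refine ⟨restrictEdges {v}ᶜ M, isMaximalMatching_iff_forall_touches.mpr
      ⟨hN, fun e he => (hcover e he).resolve_right ?_⟩, card_restrictEdges_le⟩
    rintro ⟨f, hf, hvf, -⟩
    exact hv f hf hvf

lemma IsMaximalMatching.exists_of_induce_compl {v : V} {N : Finset (Sym2 ({v}ᶜ : Set V))}
    (hN : IsMaximalMatching (G.induce {v}ᶜ) N) : ∃ M, IsMaximalMatching G M := by
  obtain ⟨hmatch, htouch⟩ := isMaximalMatching_iff_forall_touches.mp hN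
  set ι := SimpleGraph.Embedding.induce (G := G) {v}ᶜ
  have hv : ∀ e ∈ G.edgeSet, ¬Touches (N.map ι.toEmbedding.sym2Map) e → v ∈ e := by
    intro e he hNe
    by_contra hve
    have hes : ∀ x ∈ e, x ∈ ({v}ᶜ : Set V) := fun x hx hxv => hve (hxv ▸ hx)
    rw [← Sym2.attachWith_map_subtypeVal hes] at he hNe
    exact hNe ((touches_map_iff _).mpr (htouch _ (ι.map_mem_edgeSet_iff.mp he)))
  obtain ⟨M, hM, -⟩ :=
    ((isMatching_map_iff ι).mpr hmatch).exists_isMaximalMatching_card_le_succ hv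
  exact ⟨M, hM⟩

end Induce

end

theorem minMatchNum_deleteVertex_le_general {V : Type*} (G : SimpleGraph V) (v : V) :
    minMatchNum (G.induce ({v}ᶜ : Set V)) ≤ minMatchNum G :=
  minMatchNum_le_of_exists (fun _ hM => hM.exists_induce_compl_card_le v)
    fun ⟨_, hN⟩ => hN.exists_of_induce_compl

theorem minMatchNum_deleteVertex_le {V : Type*} [Fintype V] (G : SimpleGraph V) (v : V) :
    minMatchNum (G.induce ({v}ᶜ : Set V)) ≤ minMatchNum G :=
  minMatchNum_deleteVertex_le_general G v

end MatchingPaper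
end

section
/- Let a, b, c be integers with a ≥ 1, a ≥ b ≥ 0 and c ≥ 0, and let G = G^{(1)}_{a,b,c} be the graph described below. Then |V(G)| = 2a + 2b + c, ind-match(G) = 1, min-match(G) = a, and match(G) = a + b. -/
namespace MatchingPaper

variable {V : Type*}

/-- The graph `G^{(1)}_{a,b,c}` : a complete graph on `X = {x_1, …, x_{2a}}`
(here `Sum.inl`), pendant edges `{x_i, y_i}` for `1 ≤ i ≤ 2b`
(`Y` is `Sum.inr ∘ Sum.inl`), and pendant edges `{x_{2a}, z_i}` for `1 ≤ i ≤ c`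
(`Z` is `Sum.inr ∘ Sum.inr`). Vertices are 0-indexed, so `x_{2a}` has index `2a - 1`. -/
def G1 (a b c : ℕ) : SimpleGraph (Fin (2 * a) ⊕ Fin (2 * b) ⊕ Fin c) :=
  SimpleGraph.fromRel fun p q =>
    match p, q with
    | Sum.inl i, Sum.inl j => i ≠ j
    | Sum.inl i, Sum.inr (Sum.inl j) => (i : ℕ) = (j : ℕ)
    | Sum.inl i, Sum.inr (Sum.inr _) => (i : ℕ) = 2 * a - 1
    | _, _ => False

/-! Every edge of `G1 a b c` meets the clique `X`. Hence two edges of an induced matching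
would be joined by an edge inside `X`, and a maximal matching leaves at most one vertex of `X`
uncovered, so it has at least `a` edges. Every `z_k` hangs off the single vertex `x_{2a}`, so a
matching covers at most one of them, hence at most `2a + 2b + 1` vertices and has at most
`a + b` edges. Both bounds are attained by pairing each `x_i` either with a neighbour in `X` or,
for the matching number, with `y_i` when `i ≤ 2b`. -/

open scoped Finset

section General

variable {G : SimpleGraph V} {M : Finset (Sym2 V)}

def verts [DecidableEq V] (M : Finset (Sym2 V)) : Finset V := M.biUnion Sym2.toFinset

@[simp]
lemma mem_verts [DecidableEq V] {v : V} : v ∈ verts M ↔ ∃ e ∈ M, v ∈ e := by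
  simp [verts, Sym2.mem_toFinset]

lemma IsMatching.card_verts [DecidableEq V] (hM : IsMatching G M) :
    #(verts M) = 2 * #M := by
  have hdisj : (M : Set (Sym2 V)).PairwiseDisjoint Sym2.toFinset := by
    intro e he f hf hef
    exact Finset.disjoint_left.2 fun v hve hvf =>
      hM.2 e he f hf hef v (Sym2.mem_toFinset.1 hve) (Sym2.mem_toFinset.1 hvf)
  rw [verts, Finset.card_biUnion hdisj, Finset.sum_congr rfl fun e he =>
    Sym2.card_toFinset_of_not_isDiag e (G.not_isDiag_of_mem_edgeSet (hM.1 he)),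
    Finset.sum_const, smul_eq_mul, mul_comm]

lemma IsMatching.insert [DecidableEq V] {e : Sym2 V} (hM : IsMatching G M)
    (he : e ∈ G.edgeSet) (hfree : ∀ v ∈ e, v ∉ verts M) : IsMatching G (insert e M) := by
  refine ⟨?_, ?_⟩
  · rw [Finset.coe_insert]
    exact Set.insert_subset he hM.1
  · simp only [Finset.mem_insert]
    rintro f (rfl | hf) g (rfl | hg) hfg v hvf hvg
    · exact hfg rfl
    · exact hfree v hvf (mem_verts.2 ⟨g, hg, hvg⟩)
    · exact hfree v hvg (mem_verts.2 ⟨f, hf, hvf⟩)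
    · exact hM.2 f hf g hg hfg v hvf hvg

lemma isInducedMatching_singleton {e : Sym2 V} (he : e ∈ G.edgeSet) :
    IsInducedMatching G {e} := by
  refine ⟨⟨by simpa using he, ?_⟩, ?_⟩ <;>
  · intro f hf g hg hfg
    rw [Finset.mem_singleton] at hf hg
    exact absurd (hf.trans hg.symm) hfg

lemma IsInducedMatching.card_le_one_of_isClique {K : Set V} (hK : G.IsClique K)
    (hcover : ∀ e ∈ G.edgeSet, ∃ v ∈ K, v ∈ e) (hM : IsInducedMatching G M) : #M ≤ 1 := by
  refine Finset.card_le_one.2 fun e he f hf => by_contra fun hef => ?_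
  obtain ⟨x, hxK, hxe⟩ := hcover e (hM.1.1 he)
  obtain ⟨y, hyK, hyf⟩ := hcover f (hM.1.1 hf)
  have hxy : x ≠ y := by
    rintro rfl
    exact hM.1.2 e he f hf hef x hxe hyf
  exact hM.2 e he f hf hef s(x, y) (hK hxK hyK hxy) ⟨x, Sym2.mem_mk_left x y, hxe⟩
    ⟨y, Sym2.mem_mk_right x y, hyf⟩

lemma IsMaximalMatching.card_le_of_isClique [DecidableEq V] {K : Finset V}
    (hK : G.IsClique (K : Set V)) (hM : IsMaximalMatching G M) : #K ≤ 2 * #M + 1 := by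
  have hfree : #(K \ verts M) ≤ 1 := by
    refine Finset.card_le_one.2 fun x hx y hy => by_contra fun hxy => ?_
    rw [Finset.mem_sdiff] at hx hy
    have hnew : s(x, y) ∉ M := fun h => hx.2 (mem_verts.2 ⟨_, h, Sym2.mem_mk_left x y⟩)
    refine hM.2 s(x, y) (hK hx.1 hy.1 hxy) hnew ?_
    convert hM.1.insert (e := s(x, y)) (hK hx.1 hy.1 hxy) fun v hv => ?_
    rcases Sym2.mem_iff.1 hv with rfl | rfl
    exacts [hx.2, hy.2]
  calc #K ≤ #(K \ verts M) + #(verts M) := Finset.card_le_card_sdiff_add_card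
    _ ≤ 2 * #M + 1 := by rw [hM.1.card_verts]; omega

lemma IsMatching.isMaximalMatching [DecidableEq V] (hM : IsMatching G M)
    (hcover : ∀ e ∈ G.edgeSet, ∃ v ∈ e, v ∈ verts M) : IsMaximalMatching G M := by
  refine ⟨hM, fun e he heM hins => ?_⟩
  obtain ⟨v, hve, hv⟩ := hcover e he
  obtain ⟨f, hf, hvf⟩ := mem_verts.1 hv
  exact hins.2 e (by simp) f (by simp [hf]) (fun h => heM (h ▸ hf)) v hve hvf

lemma IsMatching.card_inter_verts_le_one [DecidableEq V] {S : Finset V} {w : V}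
    (hS : ∀ s ∈ S, ∀ v, G.Adj s v → v = w) (hM : IsMatching G M) :
    #(S ∩ verts M) ≤ 1 := by
  have hedge : ∀ s ∈ S, ∀ e ∈ M, s ∈ e → e = s(s, w) := by
    intro s hs e he hse
    obtain ⟨u, rfl⟩ := Sym2.mem_iff_exists.1 hse
    rw [hS s hs u (hM.1 he)]
  refine Finset.card_le_one.2 fun s hs t ht => by_contra fun hst => ?_
  simp only [Finset.mem_inter, mem_verts] at hs ht
  obtain ⟨hsS, e, he, hse⟩ := hs
  obtain ⟨htS, f, hf, htf⟩ := ht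
  have hef : e ≠ f := by
    rwa [hedge s hsS e he hse, hedge t htS f hf htf, Ne, Sym2.congr_left]
  exact hM.2 e he f hf hef w (hedge s hsS e he hse ▸ Sym2.mem_mk_right s w)
    (hedge t htS f hf htf ▸ Sym2.mem_mk_right t w)

lemma isMatching_edgeFinset {H : SimpleGraph V} [Fintype H.edgeSet] (hHG : H ≤ G)
    (hH : ∀ u v w, H.Adj u v → H.Adj u w → v = w) : IsMatching G H.edgeFinset := by
  refine ⟨fun e he => SimpleGraph.edgeSet_mono hHG (by simpa using he), ?_⟩
  intro e he f hf hef v hve hvf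
  rw [SimpleGraph.mem_edgeFinset] at he hf
  obtain ⟨u, rfl⟩ := Sym2.mem_iff_exists.1 hve
  obtain ⟨u', rfl⟩ := Sym2.mem_iff_exists.1 hvf
  exact hef (by rw [hH v u u' he hf])

lemma mem_verts_edgeFinset [DecidableEq V] {H : SimpleGraph V} [Fintype H.edgeSet] {v : V} :
    v ∈ verts H.edgeFinset ↔ ∃ w, H.Adj v w := by
  simp only [mem_verts, SimpleGraph.mem_edgeFinset]
  constructor
  · rintro ⟨e, he, hve⟩
    obtain ⟨w, rfl⟩ := Sym2.mem_iff_exists.1 hve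
    exact ⟨w, he⟩
  · rintro ⟨w, hw⟩
    exact ⟨s(v, w), hw, Sym2.mem_mk_left v w⟩

end General

section G1

variable {a b c : ℕ}

@[simp] lemma G1_adj_inl_inl {i j : Fin (2 * a)} :
    (G1 a b c).Adj (.inl i) (.inl j) ↔ i ≠ j := by
  simp [G1, ne_comm]

@[simp] lemma G1_adj_inl_inr_inr {i : Fin (2 * a)} {k : Fin c} :
    (G1 a b c).Adj (.inl i) (.inr (.inr k)) ↔ (i : ℕ) = 2 * a - 1 := by
  simp [G1]

@[simp] lemma G1_not_adj_inr_inr {u v : Fin (2 * b) ⊕ Fin c} :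
    ¬ (G1 a b c).Adj (.inr u) (.inr v) := by
  rcases u with _ | _ <;> rcases v with _ | _ <;> simp [G1]

def xVerts (a b c : ℕ) : Finset (Fin (2 * a) ⊕ Fin (2 * b) ⊕ Fin c) := Finset.univ.map .inl

def zVerts (a b c : ℕ) : Finset (Fin (2 * a) ⊕ Fin (2 * b) ⊕ Fin c) :=
  Finset.univ.map (.trans .inr .inr)

@[simp] lemma inl_mem_xVerts {i : Fin (2 * a)} : .inl i ∈ xVerts a b c := by
  simp [xVerts]

lemma card_xVerts : #(xVerts a b c) = 2 * a := by
  simp [xVerts]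

lemma card_compl_zVerts : #(zVerts a b c)ᶜ = 2 * a + 2 * b := by
  simp only [zVerts, Finset.card_compl, Finset.card_map, Finset.card_univ, Fintype.card_sum,
    Fintype.card_fin]
  omega

lemma isClique_xVerts : (G1 a b c).IsClique (xVerts a b c : Set _) := by
  intro u hu v hv huv
  obtain ⟨i, -, rfl⟩ := Finset.mem_map.1 hu
  obtain ⟨j, -, rfl⟩ := Finset.mem_map.1 hv
  exact G1_adj_inl_inl.2 fun h => huv (congrArg Sum.inl h)

lemma exists_mem_xVerts_of_mem_edgeSet {e : Sym2 (Fin (2 * a) ⊕ Fin (2 * b) ⊕ Fin c)}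
    (he : e ∈ (G1 a b c).edgeSet) : ∃ v ∈ xVerts a b c, v ∈ e := by
  induction e using Sym2.ind with
  | _ u v =>
    rcases u with i | u
    · exact ⟨_, inl_mem_xVerts, Sym2.mem_mk_left _ _⟩
    rcases v with j | v
    · exact ⟨_, inl_mem_xVerts, Sym2.mem_mk_right _ _⟩
    exact absurd he G1_not_adj_inr_inr

lemma G1_adj_of_mem_zVerts (ha : 1 ≤ a) {s v : Fin (2 * a) ⊕ Fin (2 * b) ⊕ Fin c}
    (hs : s ∈ zVerts a b c) (hsv : (G1 a b c).Adj s v) : v = .inl ⟨2 * a - 1, by omega⟩ := by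
  obtain ⟨k, -, rfl⟩ := Finset.mem_map.1 hs
  rcases v with i | v
  · rw [SimpleGraph.adj_comm] at hsv
    simp only [Function.Embedding.trans_apply, Function.Embedding.inr_apply,
      G1_adj_inl_inr_inr] at hsv
    exact congrArg Sum.inl (Fin.ext hsv)
  · exact absurd hsv G1_not_adj_inr_inr

lemma IsInducedMatching.card_le_one_G1 {M : Finset (Sym2 (Fin (2 * a) ⊕ Fin (2 * b) ⊕ Fin c))}
    (hM : IsInducedMatching (G1 a b c) M) : #M ≤ 1 :=
  hM.card_le_one_of_isClique isClique_xVerts fun _ => exists_mem_xVerts_of_mem_edgeSet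

lemma IsMaximalMatching.le_card_G1 {M : Finset (Sym2 (Fin (2 * a) ⊕ Fin (2 * b) ⊕ Fin c))}
    (hM : IsMaximalMatching (G1 a b c) M) : a ≤ #M := by
  have := hM.card_le_of_isClique isClique_xVerts
  rw [card_xVerts] at this
  omega

lemma IsMatching.card_le_G1 (ha : 1 ≤ a)
    {M : Finset (Sym2 (Fin (2 * a) ⊕ Fin (2 * b) ⊕ Fin c))}
    (hM : IsMatching (G1 a b c) M) : #M ≤ a + b := by
  have hz := hM.card_inter_verts_le_one fun _ hs _ => G1_adj_of_mem_zVerts ha hs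
  have hrest : #(verts M \ zVerts a b c) ≤ 2 * a + 2 * b := by
    rw [← card_compl_zVerts, Finset.sdiff_eq_inter_compl]
    exact Finset.card_le_card Finset.inter_subset_right
  have := Finset.card_sdiff_add_card_inter (verts M) (zVerts a b c)
  rw [hM.card_verts, Finset.inter_comm] at this
  omega

end G1

section Pairing

variable {a b c m : ℕ}

/-- `x_i` is paired with `y_i` for `i < 2m`, and the remaining `x_i` are paired as
`{x_{2k}, x_{2k+1}}`. -/
def pairing (a b c m : ℕ) : SimpleGraph (Fin (2 * a) ⊕ Fin (2 * b) ⊕ Fin c) :=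
  SimpleGraph.fromRel fun p q =>
    match p, q with
    | .inl i, .inl j => 2 * m ≤ (i : ℕ) ∧ (i : ℕ) / 2 = (j : ℕ) / 2
    | .inl i, .inr (.inl j) => (i : ℕ) = j ∧ (i : ℕ) < 2 * m
    | _, _ => False

lemma pairing_le_G1 : pairing a b c m ≤ G1 a b c := by
  intro u v huv
  rcases u with i | j | k <;> rcases v with i' | j' | k' <;>
    simp_all [pairing, G1, Fin.ext_iff]

lemma pairing_adj_unique {u v w : Fin (2 * a) ⊕ Fin (2 * b) ⊕ Fin c}
    (huv : (pairing a b c m).Adj u v) (huw : (pairing a b c m).Adj u w) : v = w := by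
  rcases u with i | j | k <;> rcases v with i' | j' | k' <;> rcases w with i'' | j'' | k'' <;>
    simp_all [pairing, Fin.ext_iff] <;> omega

lemma exists_pairing_adj_inl (hmb : m ≤ b) (i : Fin (2 * a)) :
    ∃ w, (pairing a b c m).Adj (.inl i) w := by
  have hi := i.isLt
  by_cases hy : (i : ℕ) < 2 * m
  · exact ⟨.inr (.inl ⟨i, by omega⟩), by simp [pairing, hy]⟩
  by_cases heven : (i : ℕ) % 2 = 0
  · exact ⟨.inl ⟨i + 1, by omega⟩, by simp [pairing, Fin.ext_iff]; omega⟩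
  · exact ⟨.inl ⟨i - 1, by omega⟩, by simp [pairing, Fin.ext_iff]; omega⟩

lemma exists_pairing_adj_inr_inl (hba : b ≤ a) (j : Fin (2 * b)) :
    ∃ w, (pairing a b c b).Adj (.inr (.inl j)) w :=
  ⟨.inl ⟨j, by omega⟩, by simp [pairing]⟩

lemma mem_xVerts_of_pairing_zero_adj {u v : Fin (2 * a) ⊕ Fin (2 * b) ⊕ Fin c}
    (huv : (pairing a b c 0).Adj u v) : u ∈ xVerts a b c := by
  rcases u with i | j | k
  · exact inl_mem_xVerts
  all_goals rcases v with i' | j' | k' <;> simp [pairing] at huv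

open Classical in
lemma isMaximalMatching_pairing_zero :
    IsMaximalMatching (G1 a b c) (pairing a b c 0).edgeFinset := by
  refine (isMatching_edgeFinset pairing_le_G1 fun _ _ _ => pairing_adj_unique).isMaximalMatching
    fun e he => ?_
  obtain ⟨v, hvX, hve⟩ := exists_mem_xVerts_of_mem_edgeSet he
  obtain ⟨i, -, rfl⟩ := Finset.mem_map.1 hvX
  exact ⟨_, hve, mem_verts_edgeFinset.2 (exists_pairing_adj_inl (Nat.zero_le b) i)⟩

end Pairing

section Invariants

variable {a b c : ℕ}

open Classical in
lemma card_edgeFinset_pairing_zero_le : #(pairing a b c 0).edgeFinset ≤ a := by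
  have hverts : verts (pairing a b c 0).edgeFinset ⊆ xVerts a b c := fun v hv =>
    have ⟨_, hvw⟩ := mem_verts_edgeFinset.1 hv
    mem_xVerts_of_pairing_zero_adj hvw
  have := Finset.card_le_card hverts
  rw [isMaximalMatching_pairing_zero.1.card_verts, card_xVerts] at this
  omega

open Classical in
lemma le_card_edgeFinset_pairing (hba : b ≤ a) : a + b ≤ #(pairing a b c b).edgeFinset := by
  have hverts : (zVerts a b c)ᶜ ⊆ verts (pairing a b c b).edgeFinset := by
    intro v hv
    rw [mem_verts_edgeFinset]
    rcases v with i | j | k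
    · exact exists_pairing_adj_inl le_rfl i
    · exact exists_pairing_adj_inr_inl hba j
    · simp [zVerts] at hv
  have := Finset.card_le_card hverts
  rw [(isMatching_edgeFinset (G := G1 a b c) pairing_le_G1
    fun _ _ _ => pairing_adj_unique).card_verts, card_compl_zVerts] at this
  omega

lemma indMatchNum_G1 (ha : 1 ≤ a) : indMatchNum (G1 a b c) = 1 := by
  have hx₀x₁ : s(.inl ⟨0, by omega⟩, .inl ⟨1, by omega⟩) ∈ (G1 a b c).edgeSet := by simp
  refine IsGreatest.csSup_eq
    ⟨⟨_, isInducedMatching_singleton hx₀x₁, Finset.card_singleton _⟩, ?_⟩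
  rintro _ ⟨M, hM, rfl⟩
  exact hM.card_le_one_G1

lemma minMatchNum_G1 : minMatchNum (G1 a b c) = a := by
  refine IsLeast.csInf_eq ⟨⟨_, isMaximalMatching_pairing_zero, le_antisymm
    card_edgeFinset_pairing_zero_le isMaximalMatching_pairing_zero.le_card_G1⟩, ?_⟩
  rintro _ ⟨M, hM, rfl⟩
  exact hM.le_card_G1

lemma matchNum_G1 (ha : 1 ≤ a) (hba : b ≤ a) : matchNum (G1 a b c) = a + b := by
  classical
  have hM := isMatching_edgeFinset (G := G1 a b c) (H := pairing a b c b) pairing_le_G1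
    fun _ _ _ => pairing_adj_unique
  refine IsGreatest.csSup_eq ⟨⟨_, hM, le_antisymm (hM.card_le_G1 ha)
    (le_card_edgeFinset_pairing hba)⟩, ?_⟩
  rintro _ ⟨M, hM, rfl⟩
  exact hM.card_le_G1 ha

end Invariants

theorem G1_invariants (a b c : ℕ) (ha : 1 ≤ a) (hba : b ≤ a) :
    Fintype.card (Fin (2 * a) ⊕ Fin (2 * b) ⊕ Fin c) = 2 * a + 2 * b + c ∧
      indMatchNum (G1 a b c) = 1 ∧
      minMatchNum (G1 a b c) = a ∧
      matchNum (G1 a b c) = a + b := by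
  refine ⟨?_, indMatchNum_G1 ha, minMatchNum_G1, matchNum_G1 ha hba⟩
  simp only [Fintype.card_sum, Fintype.card_fin, add_assoc]

end MatchingPaper
end
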